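/- In the Weyl algebra W, for all c, d, f, g ∈ ℕ the following identity holds: (X^c Y^d)·(X^f Y^g) = Σ_{k=0}^{min(d,f)} C(d,k)·(f)_k · ħ^k · X^{c+f−k} Y^{d+g−k}, where C(d,k) is the binomial coefficient and (f)_k = f(f−1)⋯(f−k+1) is the falling factorial. -/

import Mathlib

noncomputable section

/-- The defining relation of the Weyl algebra: `YX = XY + ħ` in the free
`ℝ[ħ]`-algebra on two generators. -/
inductive WeylRel : FreeAlgebra (Polynomial ℝ) (Fin 2) →
    FreeAlgebra (Polynomial ℝ) (Fin 2) → Prop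
  | comm : WeylRel (FreeAlgebra.ι (Polynomial ℝ) 1 * FreeAlgebra.ι (Polynomial ℝ) 0)
      (FreeAlgebra.ι (Polynomial ℝ) 0 * FreeAlgebra.ι (Polynomial ℝ) 1
        + algebraMap (Polynomial ℝ) (FreeAlgebra (Polynomial ℝ) (Fin 2)) Polynomial.X)

/-- The Weyl algebra: the quotient of the free `ℝ[ħ]`-algebra on `X, Y` by the
two-sided ideal generated by `YX − XY − ħ`. -/
abbrev Weyl : Type := RingQuot WeylRel

/-- The generator `X` of the Weyl algebra. -/
def Xw : Weyl := RingQuot.mkAlgHom (Polynomial ℝ) WeylRel (FreeAlgebra.ι (Polynomial ℝ) 0)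

/-- The generator `Y` of the Weyl algebra. -/
def Yw : Weyl := RingQuot.mkAlgHom (Polynomial ℝ) WeylRel (FreeAlgebra.ι (Polynomial ℝ) 1)

/-- `ħ` as an element of the Weyl algebra. -/
def hW : Weyl := algebraMap (Polynomial ℝ) Weyl Polynomial.X

lemma comm1 : Yw * Xw = Xw * Yw + hW := by
  have h := RingQuot.mkAlgHom_rel (Polynomial ℝ) WeylRel.comm
  simpa [Xw, Yw, hW, map_mul, map_add, AlgHom.commutes] using h

lemma hW_comm (x : Weyl) : hW * x = x * hW :=
  Algebra.commutes (R := Polynomial ℝ) Polynomial.X x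

lemma hW_pow_comm (k : ℕ) (x : Weyl) : hW ^ k * x = x * hW ^ k := by
  have := Algebra.commutes (R := Polynomial ℝ) (Polynomial.X ^ k) x
  simpa [hW, map_pow] using this

lemma YXf (f : ℕ) : Yw * Xw ^ f = Xw ^ f * Yw + f • (hW * Xw ^ (f - 1)) := by
  induction f with
  | zero => simp
  | succ f ih =>
    rw [pow_succ, ← mul_assoc, ih, add_mul, mul_assoc, comm1, mul_add, ← mul_assoc,
      ← pow_succ, smul_mul_assoc, mul_assoc, succ_nsmul, ← hW_comm (Xw ^ f)]
    have hX : f • (hW * (Xw ^ (f - 1) * Xw)) = f • (hW * Xw ^ f) := by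
      cases f with
      | zero => simp
      | succ n => rw [Nat.add_sub_cancel, ← pow_succ]
    rw [hX]
    rw [Nat.add_sub_cancel, add_assoc, add_comm (hW * Xw ^ f) (f • (hW * Xw ^ f))]

lemma descFac_mul (f k : ℕ) : f * (f - 1).descFactorial k = f.descFactorial (k + 1) := by
  cases f with
  | zero => simp
  | succ n => rw [Nat.add_sub_cancel, Nat.succ_descFactorial_succ]

lemma pascal_sum {M : Type*} [AddCommMonoid M] (d f : ℕ) (T : ℕ → M) :
    ∑ k ∈ Finset.range (d + 2), ((d + 1).choose k * f.descFactorial k) • T k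
    = ∑ k ∈ Finset.range (d + 1), (d.choose k * f.descFactorial k) • T k
      + ∑ k ∈ Finset.range (d + 1), (d.choose k * f.descFactorial (k + 1)) • T (k + 1) := by
  rw [Finset.sum_range_succ'
    (fun k => ((d + 1).choose k * f.descFactorial k) • T k) (d + 1)]
  simp only [Nat.choose_succ_succ, add_mul, add_smul, Finset.sum_add_distrib,
    Nat.choose_zero_right, Nat.descFactorial_zero, mul_one, one_smul]
  rw [Finset.sum_range_succ (fun k => (d.choose (k + 1) * f.descFactorial (k + 1)) • T (k + 1)) d,
    Nat.choose_succ_self, zero_mul, zero_smul, add_zero]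
  rw [Finset.sum_range_succ' (fun k => (d.choose k * f.descFactorial k) • T k) d]
  simp only [Nat.choose_zero_right, Nat.descFactorial_zero, mul_one, one_smul]
  abel

lemma core (d f : ℕ) : Yw ^ d * Xw ^ f
    = ∑ k ∈ Finset.range (d + 1),
        (d.choose k * f.descFactorial k) • (hW ^ k * (Xw ^ (f - k) * Yw ^ (d - k))) := by
  induction d generalizing f with
  | zero => simp
  | succ d ih =>
    have step : Yw ^ (d + 1) * Xw ^ f
        = (Yw ^ d * Xw ^ f) * Yw + f • (hW * (Yw ^ d * Xw ^ (f - 1))) := by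
      rw [pow_succ, mul_assoc, YXf, mul_add, ← mul_assoc, mul_smul_comm]
      congr 2
      rw [← mul_assoc, ← hW_comm (Yw ^ d), mul_assoc]
    rw [step, ih f, ih (f - 1), Finset.sum_mul, Finset.mul_sum, Finset.smul_sum]
    have h1 : ∀ k ∈ Finset.range (d + 1),
        (d.choose k * f.descFactorial k) • (hW ^ k * (Xw ^ (f - k) * Yw ^ (d - k))) * Yw
        = (d.choose k * f.descFactorial k) •
            (hW ^ k * (Xw ^ (f - k) * Yw ^ (d + 1 - k))) := by
      intro k hk
      rw [Finset.mem_range] at hk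
      have : d + 1 - k = (d - k) + 1 := by omega
      rw [this, smul_mul_assoc, mul_assoc, mul_assoc, ← pow_succ]
    have h2 : ∀ k ∈ Finset.range (d + 1),
        f • (hW * ((d.choose k * (f - 1).descFactorial k) •
            (hW ^ k * (Xw ^ (f - 1 - k) * Yw ^ (d - k)))))
        = (d.choose k * f.descFactorial (k + 1)) •
            (hW ^ (k + 1) * (Xw ^ (f - (k + 1)) * Yw ^ (d + 1 - (k + 1)))) := by
      intro k hk
      have he : f - 1 - k = f - (k + 1) := by omega
      have hd : d - k = d + 1 - (k + 1) := by omega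
      rw [he, hd, mul_smul_comm, smul_smul, ← mul_assoc hW (hW ^ k), ← pow_succ']
      congr 1
      rw [← descFac_mul f k]
      ring
    rw [Finset.sum_congr rfl h1, Finset.sum_congr rfl h2]
    exact (pascal_sum d f (fun k => hW ^ k * (Xw ^ (f - k) * Yw ^ (d + 1 - k)))).symm

lemma swap_hW_pow (c k : ℕ) (a : Weyl) : Xw ^ c * (hW ^ k * a) = hW ^ k * (Xw ^ c * a) := by
  rw [← mul_assoc, ← hW_pow_comm, mul_assoc]

/-- in the Weyl algebra,
`(X^c Y^d)(X^f Y^g) = Σ_{k=0}^{min(d,f)} C(d,k) (f)_k ħ^k X^{c+f−k} Y^{d+g−k}`. -/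
theorem weyl_normal_ordering (c d f g : ℕ) :
    (Xw ^ c * Yw ^ d) * (Xw ^ f * Yw ^ g)
      = ∑ k ∈ Finset.range (min d f + 1),
          (d.choose k * Nat.descFactorial f k) •
            (hW ^ k * (Xw ^ (c + f - k) * Yw ^ (d + g - k))) := by
  rw [mul_assoc, ← mul_assoc (Yw ^ d) (Xw ^ f) (Yw ^ g), core d f, Finset.sum_mul,
    Finset.mul_sum]
  have hpt : ∀ k ∈ Finset.range (d + 1),
      Xw ^ c * ((d.choose k * f.descFactorial k) •
          (hW ^ k * (Xw ^ (f - k) * Yw ^ (d - k))) * Yw ^ g)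
      = (d.choose k * f.descFactorial k) •
          (hW ^ k * (Xw ^ (c + f - k) * Yw ^ (d + g - k))) := by
    intro k hk
    rw [Finset.mem_range] at hk
    by_cases hkf : k ≤ f
    · have e1 : c + f - k = c + (f - k) := by omega
      have e2 : d + g - k = (d - k) + g := by omega
      rw [smul_mul_assoc, mul_smul_comm, e1, e2, pow_add, pow_add,
        mul_assoc (hW ^ k), swap_hW_pow, ← mul_assoc (Xw ^ c), ← mul_assoc (Xw ^ c),
        mul_assoc (Xw ^ c * Xw ^ (f - k))]
    · have : f.descFactorial k = 0 := Nat.descFactorial_eq_zero_iff_lt.2 (by omega)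
      simp [this]
  rw [Finset.sum_congr rfl hpt]
  refine (Finset.sum_subset (Finset.range_subset_range.2 (by omega)) ?_).symm
  intro k hk hk'
  rw [Finset.mem_range] at hk
  rw [Finset.mem_range, not_lt] at hk'
  have : f.descFactorial k = 0 := Nat.descFactorial_eq_zero_iff_lt.2 (by omega)
  simp [this]
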